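/- Fix constants a, b > 0 with a ≠ b and t ∈ (0,1). Let p_n = a (log n)/n and q_n = b (log n)/n. Then, as n → ∞, the scaled Chernoff coefficient of Bernoulli distributions satisfies (n/log n) · (1−t) D_t(Ber(p_n) ‖ Ber(q_n)) → t·a + (1−t)·b − a^t b^{1−t}; equivalently (1−t)D_t(Ber(p_n)‖Ber(q_n)) = (1+o(1)) (log n / n) [t a + (1−t) b − a^t b^{1−t}]. -/

import Mathlib

/-!
Put `L = log n / n → 0⁺`. Since `Ber(aL)` and `Ber(bL)` share the factor `L` in their success
probabilities, `(aL)^t (bL)^{1-t} = a^t b^{1-t} L`, so `(1-t) D_t = -log f(L)` with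
`f(L) = a^t b^{1-t} L + (1 - aL)^t (1 - bL)^{1-t}`, a function smooth at `0` with `f(0) = 1`.
Hence `(1-t) D_t / L → -(log ∘ f)'(0) = -f'(0) = t a + (1-t) b - a^t b^{1-t}`.
-/

open Filter Topology

noncomputable section

/-- Rényi divergence of order `t` between `Ber(p)` and `Ber(q)`:
`D_t(Ber(p)‖Ber(q)) = (1/(t−1)) log(p^t q^{1−t} + (1−p)^t (1−q)^{1−t})`. -/
def renyiBer (t p q : ℝ) : ℝ :=
  (1 / (t - 1)) * Real.log (p ^ t * q ^ (1 - t) + (1 - p) ^ t * (1 - q) ^ (1 - t))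

lemma one_sub_mul_renyiBer {t : ℝ} (ht : t ≠ 1) (p q : ℝ) :
    (1 - t) * renyiBer t p q =
      -Real.log (p ^ t * q ^ (1 - t) + (1 - p) ^ t * (1 - q) ^ (1 - t)) := by
  have : t - 1 ≠ 0 := sub_ne_zero.mpr ht
  rw [renyiBer]
  field_simp
  ring

lemma Real.mul_rpow_mul_mul_rpow_one_sub {a b L : ℝ} (ha : 0 ≤ a) (hb : 0 ≤ b) (hL : 0 ≤ L)
    (t : ℝ) : (a * L) ^ t * (b * L) ^ (1 - t) = a ^ t * b ^ (1 - t) * L := by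
  calc (a * L) ^ t * (b * L) ^ (1 - t) = a ^ t * b ^ (1 - t) * L ^ (t + (1 - t)) := by
        rw [Real.mul_rpow ha hL, Real.mul_rpow hb hL, Real.rpow_add' hL (by norm_num)]
        ring
    _ = a ^ t * b ^ (1 - t) * L := by norm_num

lemma Real.tendsto_log_natCast_div_natCast_nhdsGT_zero :
    Tendsto (fun n : ℕ => Real.log n / n) atTop (𝓝[>] 0) := by
  refine tendsto_nhdsWithin_iff.mpr ⟨?_, ?_⟩
  · exact Real.isLittleO_log_id_atTop.tendsto_div_nhds_zero.comp tendsto_natCast_atTop_atTop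
  · filter_upwards [eventually_gt_atTop 1] with n hn
    have hn : (1 : ℝ) < n := by exact_mod_cast hn
    exact div_pos (Real.log_pos hn) (by linarith)

lemma hasDerivAt_mul_add_one_sub_mul_rpow_mul_one_sub_mul_rpow (a b c t : ℝ) :
    HasDerivAt (fun L => c * L + (1 - a * L) ^ t * (1 - b * L) ^ (1 - t))
      (c - (t * a + (1 - t) * b)) 0 := by
  have hline (d : ℝ) : HasDerivAt (fun L : ℝ => 1 - d * L) (-d) 0 := by
    simpa using ((hasDerivAt_id (0 : ℝ)).const_mul d).const_sub 1
  have hA := (hline a).rpow_const (p := t) (by norm_num)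
  have hB := (hline b).rpow_const (p := 1 - t) (by norm_num)
  refine (((hasDerivAt_id (0 : ℝ)).const_mul c).add (hA.mul hB)).congr_deriv ?_
  simp only [mul_zero, sub_zero, Real.one_rpow]
  ring

lemma tendsto_neg_log_mul_add_one_sub_mul_rpow_mul_one_sub_mul_rpow_div (a b c t : ℝ) :
    Tendsto (fun L => -Real.log (c * L + (1 - a * L) ^ t * (1 - b * L) ^ (1 - t)) / L)
      (𝓝[≠] 0) (𝓝 (t * a + (1 - t) * b - c)) := by
  have hlog := (hasDerivAt_mul_add_one_sub_mul_rpow_mul_one_sub_mul_rpow a b c t).log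
    (by norm_num)
  convert hlog.tendsto_slope_zero.neg using 1
  · ext L
    simp only [zero_add, mul_zero, sub_zero, Real.one_rpow, mul_one, smul_eq_mul, Real.log_one]
    ring
  · norm_num

theorem bernoulli_chernoff_coefficient_asymptotics_general
    (a b : ℝ) (ha : 0 < a) (hb : 0 < b)
    (t : ℝ) (ht : t ∈ Set.Ioo (0:ℝ) 1) :
    Tendsto (fun n : ℕ =>
        ((n : ℝ) / Real.log n) *
          ((1 - t) * renyiBer t (a * Real.log n / n) (b * Real.log n / n)))
      atTop (nhds (t * a + (1 - t) * b - a ^ t * b ^ (1 - t))) := by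
  have hL := Real.tendsto_log_natCast_div_natCast_nhdsGT_zero
  have hlimit := (tendsto_neg_log_mul_add_one_sub_mul_rpow_mul_one_sub_mul_rpow_div
    a b (a ^ t * b ^ (1 - t)) t).mono_left (nhdsGT_le_nhdsNE 0) |>.comp hL
  refine hlimit.congr' ?_
  filter_upwards [hL self_mem_nhdsWithin] with n (hLn : 0 < Real.log n / n)
  rw [Function.comp_apply, one_sub_mul_renyiBer ht.2.ne, mul_div_assoc, mul_div_assoc,
    Real.mul_rpow_mul_mul_rpow_one_sub ha.le hb.le hLn.le, div_eq_inv_mul _ (Real.log n / n),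
    inv_div]

/-- For `p_n = a log n / n` and `q_n = b log n / n` with constants
`a, b > 0`, `a ≠ b`, and `t ∈ (0,1)`,
`(n/log n) (1−t) D_t(Ber(p_n) ‖ Ber(q_n)) → t a + (1−t) b − a^t b^{1−t}`. -/
theorem bernoulli_chernoff_coefficient_asymptotics
    (a b : ℝ) (ha : 0 < a) (hb : 0 < b) (hab : a ≠ b)
    (t : ℝ) (ht : t ∈ Set.Ioo (0:ℝ) 1) :
    Tendsto (fun n : ℕ =>
        ((n : ℝ) / Real.log n) *
          ((1 - t) * renyiBer t (a * Real.log n / n) (b * Real.log n / n)))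
      atTop (nhds (t * a + (1 - t) * b - a ^ t * b ^ (1 - t))) :=
  bernoulli_chernoff_coefficient_asymptotics_general a b ha hb t ht

end
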